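/- Let (X, 𝓕, μ) be a σ-finite measure space, φ : X → X an injective nonsingular measurable map, and Φ an N-function satisfying the Δ₂-condition globally. Then the following are equivalent: (a) there exists K > 0 such that μ(φ⁻¹(F)) ≤ K μ(F) for every F ∈ 𝓕; (b) there exists L ≥ 1 such that for every F ∈ 𝓕, Φ⁻¹(1/μ(F)) ≤ Φ⁻¹(L/μ(φ⁻¹(F))) ≤ L Φ⁻¹(1/μ(φ⁻¹(F))) (with the conventions 1/0 = ∞, L/0 = ∞, 1/∞ = 0 and Φ⁻¹(∞) = ∞). -/

import Mathlib

open MeasureTheory Filter Topology Set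
open scoped ENNReal NNReal

noncomputable section

/-- A Young function: an even convex function `Φ : ℝ → [0,∞]` with `Φ 0 = 0` and
`Φ x → ∞` as `x → ∞`. -/
structure IsYoungFunction (Φ : ℝ → ℝ≥0∞) : Prop where
  even : ∀ x : ℝ, Φ (-x) = Φ x
  convex : ∀ x y : ℝ, ∀ a b : ℝ≥0, a + b = 1 →
    Φ ((a : ℝ) * x + (b : ℝ) * y) ≤ (a : ℝ≥0∞) * Φ x + (b : ℝ≥0∞) * Φ y
  map_zero : Φ 0 = 0
  tendsto_atTop : Tendsto Φ atTop (nhds ⊤)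

/-- An N-function: a finite-valued Young function vanishing exactly at `0`, with
`Φ x / x → 0` as `x → 0⁺` and `Φ x / x → ∞` as `x → ∞`. -/
structure IsNFunction (Φ : ℝ → ℝ≥0∞) extends IsYoungFunction Φ : Prop where
  lt_top : ∀ x : ℝ, Φ x < ⊤
  eq_zero_iff : ∀ x : ℝ, Φ x = 0 ↔ x = 0
  tendsto_div_zero : Tendsto (fun x : ℝ => Φ x / ENNReal.ofReal x) (nhdsWithin 0 (Set.Ioi 0)) (nhds 0)
  tendsto_div_atTop : Tendsto (fun x : ℝ => Φ x / ENNReal.ofReal x) atTop (nhds ⊤)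

/-- The Δ₂-condition, globally: `Φ (2 x) ≤ K Φ x` for all `x ≥ 0`, for some `K > 0`. -/
def Delta2Global (Φ : ℝ → ℝ≥0∞) : Prop :=
  ∃ K : ℝ≥0, 0 < K ∧ ∀ x : ℝ, 0 ≤ x → Φ (2 * x) ≤ (K : ℝ≥0∞) * Φ x

/-- The generalized inverse `Φ⁻¹ (y) = inf {x ≥ 0 : Φ x > y}` (with `inf ∅ = ∞`). -/
def youngInv (Φ : ℝ → ℝ≥0∞) (y : ℝ≥0∞) : ℝ≥0∞ :=
  ⨅ (x : ℝ) (_ : 0 ≤ x) (_ : y < Φ x), ENNReal.ofReal x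

/-- The Luxemburg (gauge) norm `N_Φ (f) = inf {k > 0 : ∫ Φ (f / k) dμ ≤ 1}`
(with `inf ∅ = ∞`). -/
def luxNorm {X : Type*} [MeasurableSpace X] (Φ : ℝ → ℝ≥0∞) (μ : Measure X)
    (f : X → ℝ) : ℝ≥0∞ :=
  ⨅ (k : ℝ) (_ : 0 < k) (_ : ∫⁻ x, Φ (f x / k) ∂μ ≤ 1), ENNReal.ofReal k

/-- Membership in the Orlicz space `L^Φ(μ)`: `f` is measurable and
`∫ Φ (k f) dμ < ∞` for some `k > 0`. -/
def MemOrlicz {X : Type*} [MeasurableSpace X] (Φ : ℝ → ℝ≥0∞) (μ : Measure X)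
    (f : X → ℝ) : Prop :=
  Measurable f ∧ ∃ k : ℝ, 0 < k ∧ ∫⁻ x, Φ (k * f x) ∂μ < ⊤

/-- Li-Yorke chaos for the composition operator `C_φ f = f ∘ φ` on `L^Φ(μ)`:
there is an uncountable set `S ⊆ L^Φ(μ)` of pairwise not μ-a.e. equal functions such
that every pair of not μ-a.e. equal members is a Li-Yorke pair for `C_φ`. -/
def CompLiYorkeChaotic {X : Type*} [MeasurableSpace X] (Φ : ℝ → ℝ≥0∞) (μ : Measure X)
    (φ : X → X) : Prop :=
  ∃ S : Set (X → ℝ), ¬ S.Countable ∧ (∀ f ∈ S, MemOrlicz Φ μ f) ∧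
    (∀ f ∈ S, ∀ g ∈ S, f ≠ g → ¬ f =ᵐ[μ] g) ∧
    ∀ f ∈ S, ∀ g ∈ S, ¬ f =ᵐ[μ] g →
      atTop.liminf (fun n : ℕ => luxNorm Φ μ ((f - g) ∘ φ^[n])) = 0 ∧
      0 < atTop.limsup (fun n : ℕ => luxNorm Φ μ ((f - g) ∘ φ^[n]))

variable {Φ : ℝ → ℝ≥0∞}

-- strict monotonicity on [0,∞)
lemma nf_strictMono (hΦ : IsNFunction Φ) {x y : ℝ} (hx : 0 ≤ x) (hxy : x < y) :
    Φ x < Φ y := by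
  have hy : 0 < y := lt_of_le_of_lt hx hxy
  set b : ℝ≥0 := ⟨x / y, div_nonneg hx hy.le⟩ with hbdef
  have hb1 : b < 1 := by
    rw [← NNReal.coe_lt_coe]
    exact (div_lt_one hy).mpr hxy
  have hsum : b + (1 - b) = 1 := add_tsub_cancel_of_le hb1.le
  have key := hΦ.convex y 0 b (1 - b) hsum
  have hbys : (b : ℝ) * y + ((1 - b : ℝ≥0) : ℝ) * 0 = x := by
    simp [hbdef, div_mul_cancel₀ _ hy.ne']
    exact div_mul_cancel₀ x hy.ne'
  rw [hbys, hΦ.map_zero, mul_zero, add_zero] at key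
  refine lt_of_le_of_lt key ?_
  have h0 : Φ y ≠ 0 := by simp [hΦ.eq_zero_iff, hy.ne']
  calc (b : ℝ≥0∞) * Φ y < 1 * Φ y := by
        exact ENNReal.mul_lt_mul_left h0 (hΦ.lt_top y).ne (by exact_mod_cast hb1)
    _ = Φ y := one_mul _

lemma nf_mono (hΦ : IsNFunction Φ) {x y : ℝ} (hx : 0 ≤ x) (hxy : x ≤ y) :
    Φ x ≤ Φ y := by
  rcases eq_or_lt_of_le hxy with rfl | h
  · exact le_rfl
  · exact (nf_strictMono hΦ hx h).le

lemma youngInv_mono {a b : ℝ≥0∞} (hab : a ≤ b) : youngInv Φ a ≤ youngInv Φ b := by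
  refine le_iInf fun x => le_iInf fun hx => le_iInf fun hb => ?_
  exact iInf₂_le_of_le x hx (iInf_le_of_le (lt_of_le_of_lt hab hb) le_rfl)

lemma youngInv_apply (hΦ : IsNFunction Φ) {x : ℝ} (hx : 0 ≤ x) :
    youngInv Φ (Φ x) = ENNReal.ofReal x := by
  refine le_antisymm ?_ ?_
  · refine ENNReal.le_of_forall_pos_le_add fun ε hε _ => ?_
    have hε' : (0:ℝ) < ε := hε
    have hlt : Φ x < Φ (x + ε) := nf_strictMono hΦ hx (by linarith)
    calc youngInv Φ (Φ x) ≤ ENNReal.ofReal (x + ε) :=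
          iInf₂_le_of_le (x + ε) (by linarith) (iInf_le_of_le hlt le_rfl)
      _ = ENNReal.ofReal x + ENNReal.ofReal ε := ENNReal.ofReal_add hx hε'.le
      _ ≤ ENNReal.ofReal x + ε := by gcongr; simp
  · refine le_iInf fun z => le_iInf fun hz => le_iInf fun hlt => ?_
    refine ENNReal.ofReal_le_ofReal ?_
    by_contra hzx
    exact absurd (nf_mono hΦ hz (not_le.mp hzx).le) (not_le.mpr hlt)

lemma nf_surj (hΦ : IsNFunction Φ) {y : ℝ≥0∞} (hy : y ≠ ⊤) :
    ∃ x : ℝ, 0 ≤ x ∧ Φ x = y := by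
  set g : ℝ → ℝ := fun x => (Φ x).toReal with hg
  have hconv : ConvexOn ℝ univ g := by
    refine ⟨convex_univ, fun x _ z _ a b ha hb hab => ?_⟩
    set a' : ℝ≥0 := ⟨a, ha⟩ with ha'
    set b' : ℝ≥0 := ⟨b, hb⟩ with hb'
    have h1 := hΦ.convex x z a' b' (by ext; exact hab)
    have hfin : (a' : ℝ≥0∞) * Φ x + (b' : ℝ≥0∞) * Φ z ≠ ⊤ :=
      ENNReal.add_ne_top.mpr ⟨ENNReal.mul_ne_top ENNReal.coe_ne_top (hΦ.lt_top x).ne,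
        ENNReal.mul_ne_top ENNReal.coe_ne_top (hΦ.lt_top z).ne⟩
    have h2 := ENNReal.toReal_mono hfin h1
    rw [ENNReal.toReal_add (ENNReal.mul_ne_top ENNReal.coe_ne_top (hΦ.lt_top x).ne)
      (ENNReal.mul_ne_top ENNReal.coe_ne_top (hΦ.lt_top z).ne), ENNReal.toReal_mul,
      ENNReal.toReal_mul] at h2
    simp only [ENNReal.coe_toReal] at h2
    exact h2
  have hcont : Continuous g := continuousOn_univ.mp (hconv.continuousOn isOpen_univ)
  have hev : ∀ᶠ x in atTop, y < Φ x := hΦ.tendsto_atTop.eventually (lt_mem_nhds hy.lt_top)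
  obtain ⟨x0, hx0⟩ := (hev.and (eventually_ge_atTop (0:ℝ))).exists
  have hgy : y.toReal ≤ g x0 := by
    refine ENNReal.toReal_mono (hΦ.lt_top x0).ne hx0.1.le
  have hg0 : g 0 = 0 := by simp [hg, hΦ.map_zero]
  have hivt := intermediate_value_Icc hx0.2 (hcont.continuousOn (s := Icc 0 x0))
  have hmem : y.toReal ∈ Icc (g 0) (g x0) := ⟨by rw [hg0]; exact ENNReal.toReal_nonneg, hgy⟩
  obtain ⟨x, hxI, hx⟩ := hivt hmem
  refine ⟨x, hxI.1, ?_⟩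
  have := congrArg ENNReal.ofReal hx
  rwa [hg, ENNReal.ofReal_toReal (hΦ.lt_top x).ne, ENNReal.ofReal_toReal hy] at this

lemma youngInv_top (hΦ : IsNFunction Φ) : youngInv Φ ⊤ = ⊤ := by
  rw [youngInv]
  simp [(hΦ.lt_top _).not_gt]

lemma youngInv_lt_top (hΦ : IsNFunction Φ) {y : ℝ≥0∞} (hy : y ≠ ⊤) :
    youngInv Φ y < ⊤ := by
  obtain ⟨x, hx, hΦx⟩ := nf_surj hΦ (y := y + 1) (by simp [hy])
  have : youngInv Φ y ≤ ENNReal.ofReal x :=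
    iInf₂_le_of_le x hx (iInf_le_of_le (hΦx ▸ ENNReal.lt_add_right hy one_ne_zero) le_rfl)
  exact lt_of_le_of_lt this ENNReal.ofReal_lt_top

/-- From the inequality of inverses, recover the inequality of arguments. -/
lemma le_of_youngInv_le (hΦ : IsNFunction Φ) {a b : ℝ≥0∞}
    (h : youngInv Φ a ≤ youngInv Φ b) : a ≤ b := by
  rcases eq_or_ne b ⊤ with rfl | hb
  · exact le_top
  rcases eq_or_ne a ⊤ with rfl | ha
  · rw [youngInv_top hΦ] at h
    exact absurd (lt_of_le_of_lt h (youngInv_lt_top hΦ hb)) (lt_irrefl _)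
  obtain ⟨xa, hxa, rfl⟩ := nf_surj hΦ ha
  obtain ⟨xb, hxb, rfl⟩ := nf_surj hΦ hb
  rw [youngInv_apply hΦ hxa, youngInv_apply hΦ hxb] at h
  exact nf_mono hΦ hxa ((ENNReal.ofReal_le_ofReal_iff hxb).mp h)

/-- Superhomogeneity from convexity: `c • Φ x ≤ Φ (c x)` for `c ≥ 1`. -/
lemma nf_le_smul (hΦ : IsNFunction Φ) {c : ℝ≥0} (hc : 1 ≤ c) (x : ℝ) :
    (c : ℝ≥0∞) * Φ x ≤ Φ ((c : ℝ) * x) := by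
  have hc0 : c ≠ 0 := by intro h; rw [h] at hc; exact absurd hc (by simp)
  have hinv : c⁻¹ + (1 - c⁻¹) = 1 := add_tsub_cancel_of_le (by
    rw [NNReal.inv_le hc0]; simpa using hc)
  have key := hΦ.convex ((c : ℝ) * x) 0 c⁻¹ (1 - c⁻¹) hinv
  have harg : ((c⁻¹ : ℝ≥0) : ℝ) * ((c : ℝ) * x) + (((1 - c⁻¹ : ℝ≥0)) : ℝ) * 0 = x := by
    have : ((c : ℝ))⁻¹ * ((c : ℝ) * x) = x := by
      field_simp
    simpa [NNReal.coe_inv] using this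
  rw [harg, hΦ.map_zero, mul_zero, add_zero] at key
  have := mul_le_mul_right key (c : ℝ≥0∞)
  rwa [← mul_assoc, ← ENNReal.coe_mul, mul_inv_cancel₀ hc0, ENNReal.coe_one, one_mul] at this

/-- `Φ⁻¹ (c y) ≤ c Φ⁻¹ (y)` for `c ≥ 1`. -/
lemma youngInv_mul_le (hΦ : IsNFunction Φ) {c : ℝ≥0} (hc : 1 ≤ c) (y : ℝ≥0∞) :
    youngInv Φ ((c : ℝ≥0∞) * y) ≤ (c : ℝ≥0∞) * youngInv Φ y := by
  have hc0 : (c : ℝ≥0∞) ≠ 0 := by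
    simpa using (lt_of_lt_of_le zero_lt_one hc).ne'
  have hrhs : (c : ℝ≥0∞) * youngInv Φ y =
      ⨅ (x : ℝ) (_ : 0 ≤ x) (_ : y < Φ x), (c : ℝ≥0∞) * ENNReal.ofReal x := by
    rw [youngInv]
    simp only [ENNReal.mul_iInf_of_ne hc0 ENNReal.coe_ne_top]
  rw [hrhs]
  refine le_iInf fun x => le_iInf fun hx => le_iInf fun hlt => ?_
  have hxc : 0 ≤ (c : ℝ) * x := mul_nonneg c.coe_nonneg hx
  have hΦc : (c : ℝ≥0∞) * y < Φ ((c : ℝ) * x) := by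
    refine lt_of_lt_of_le ?_ (nf_le_smul hΦ hc x)
    exact ENNReal.mul_lt_mul_right hc0 ENNReal.coe_ne_top hlt
  calc youngInv Φ ((c : ℝ≥0∞) * y) ≤ ENNReal.ofReal ((c : ℝ) * x) :=
        iInf₂_le_of_le _ hxc (iInf_le_of_le hΦc le_rfl)
    _ = (c : ℝ≥0∞) * ENNReal.ofReal x := by
        rw [ENNReal.ofReal_mul c.coe_nonneg, ENNReal.ofReal_coe_nnreal]

/-- Lemma 2.3: for an injective nonsingular measurable `φ` and an N-function `Φ ∈ Δ₂` (globally),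
the following are equivalent: (a) `μ(φ⁻¹(F)) ≤ K μ(F)` for all measurable `F` and some `K > 0`;
(b) there is `L ≥ 1` with `Φ⁻¹(1/μ(F)) ≤ Φ⁻¹(L/μ(φ⁻¹(F))) ≤ L Φ⁻¹(1/μ(φ⁻¹(F)))` for all
measurable `F`. -/
theorem boundedness_iff_youngInv_ineq
    {X : Type*} [MeasurableSpace X] (μ : Measure X) [SigmaFinite μ]
    (Φ : ℝ → ℝ≥0∞) (hΦ : IsNFunction Φ) (hΔ : Delta2Global Φ)
    (φ : X → X) (hφ : Measurable φ) (hinj : Function.Injective φ)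
    (hns : ∀ F : Set X, MeasurableSet F → μ F = 0 → μ (φ ⁻¹' F) = 0) :
    (∃ K : ℝ≥0, 0 < K ∧ ∀ F : Set X, MeasurableSet F → μ (φ ⁻¹' F) ≤ (K : ℝ≥0∞) * μ F) ↔
    (∃ L : ℝ≥0, 1 ≤ L ∧ ∀ F : Set X, MeasurableSet F →
      youngInv Φ (1 / μ F) ≤ youngInv Φ ((L : ℝ≥0∞) / μ (φ ⁻¹' F)) ∧
      youngInv Φ ((L : ℝ≥0∞) / μ (φ ⁻¹' F)) ≤ (L : ℝ≥0∞) * youngInv Φ (1 / μ (φ ⁻¹' F))) := by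
  constructor
  · rintro ⟨K, hK, hKle⟩
    set L : ℝ≥0 := max K 1 with hLdef
    have hL1 : (1 : ℝ≥0) ≤ L := le_max_right _ _
    have hL0 : (L : ℝ≥0∞) ≠ 0 := by
      simpa using (lt_of_lt_of_le zero_lt_one hL1).ne'
    refine ⟨L, hL1, fun F hF => ?_⟩
    have h1 : μ (φ ⁻¹' F) ≤ (L : ℝ≥0∞) * μ F := by
      refine le_trans (hKle F hF) (mul_le_mul_left ?_ _)
      exact_mod_cast le_max_left K 1
    constructor
    · refine youngInv_mono ?_
      calc 1 / μ F = (L : ℝ≥0∞) * 1 / ((L : ℝ≥0∞) * μ F) :=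
            (ENNReal.mul_div_mul_left 1 (μ F) hL0 ENNReal.coe_ne_top).symm
        _ ≤ (L : ℝ≥0∞) / μ (φ ⁻¹' F) := ENNReal.div_le_div (by rw [mul_one]) h1
    · have : (L : ℝ≥0∞) / μ (φ ⁻¹' F) = (L : ℝ≥0∞) * (1 / μ (φ ⁻¹' F)) := by
        rw [div_eq_mul_inv, one_div, mul_comm, ← mul_comm (L : ℝ≥0∞)]
      rw [this]
      exact youngInv_mul_le hΦ hL1 _
  · rintro ⟨L, hL1, hL⟩
    have hL0 : (L : ℝ≥0∞) ≠ 0 := by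
      simpa using (lt_of_lt_of_le zero_lt_one hL1).ne'
    refine ⟨L, lt_of_lt_of_le zero_lt_one hL1, fun F hF => ?_⟩
    have hble : 1 / μ F ≤ (L : ℝ≥0∞) / μ (φ ⁻¹' F) := le_of_youngInv_le hΦ (hL F hF).1
    rcases eq_or_ne (μ F) 0 with h0 | h0
    · rw [hns F hF h0]; exact zero_le
    rcases eq_or_ne (μ F) ⊤ with htop | htop
    · rw [htop, ENNReal.mul_top hL0]; exact le_top
    rcases eq_or_ne (μ (φ ⁻¹' F)) 0 with hb0 | hb0
    · rw [hb0]; exact zero_le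
    rcases eq_or_ne (μ (φ ⁻¹' F)) ⊤ with hbtop | hbtop
    · exfalso
      rw [hbtop, ENNReal.div_top, le_zero_iff, ENNReal.div_eq_zero_iff] at hble
      rcases hble with h | h
      · exact one_ne_zero h
      · exact htop h
    have hmul := mul_le_mul_right hble (μ (φ ⁻¹' F))
    rw [ENNReal.mul_div_cancel hb0 hbtop, ← mul_div_assoc, mul_one] at hmul
    exact (ENNReal.div_le_iff_le_mul (Or.inl h0) (Or.inl htop)).mp hmul
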